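/- For every integer k ≥ 1, the Hilbert system H^{2k−1} is sound with respect to M_k: if Γ ⊢_{H^{2k−1}} φ, then every homomorphic valuation v : L → V_k with v[Γ] ⊆ D_k satisfies v(φ) ∈ D_k. -/
import Mathlib


/-- Formulas over the signature Σ with unary ¬, ∘ and binary ∧, ∨, →,
freely generated from a denumerable set of propositional variables. -/
inductive Fm : Type where
  | var : ℕ → Fm
  | neg : Fm → Fm
  | circ : Fm → Fm
  | conj : Fm → Fm → Fm
  | disj : Fm → Fm → Fm
  | imp : Fm → Fm → Fm
deriving DecidableEq

/-- Substitutions act homomorphically on formulas. -/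
def subst (σ : ℕ → Fm) : Fm → Fm
  | .var n => σ n
  | .neg φ => .neg (subst σ φ)
  | .circ φ => .circ (subst σ φ)
  | .conj φ ψ => .conj (subst σ φ) (subst σ ψ)
  | .disj φ ψ => .disj (subst σ φ) (subst σ ψ)
  | .imp φ ψ => .imp (subst σ φ) (subst σ ψ)

/-- A Set-Fmla rule schema: a finite antecedent and a single succedent formula. -/
abbrev Rule : Type := Finset Fm × Fm

/-- Derivability in a Set-Fmla Hilbert system: `Derives H Γ φ` holds iff φ can be
obtained from members of Γ by finitely many applications of substitution instances
of rules of `H`. -/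
inductive Derives (H : Set Rule) : Set Fm → Fm → Prop where
  | prem : ∀ {Γ : Set Fm} {φ : Fm}, φ ∈ Γ → Derives H Γ φ
  | rule : ∀ {Γ : Set Fm} (r : Rule) (σ : ℕ → Fm), r ∈ H →
      (∀ ψ ∈ r.1, Derives H Γ (subst σ ψ)) → Derives H Γ (subst σ r.2)

/-- Iterated negation: `negIter j φ = ¬^j φ`. -/
def negIter : ℕ → Fm → Fm
  | 0, φ => φ
  | n + 1, φ => .neg (negIter n φ)

/-- (Ax10)  p ∨ ¬p. -/
def ax10 : Fm := .disj (.var 0) (.neg (.var 0))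
/-- (bc1)  ∘p → (p → (¬p → q)). -/
def bc1 : Fm := .imp (.circ (.var 0)) (.imp (.var 0) (.imp (.neg (.var 0)) (.var 1)))
/-- (ci)  ¬∘p → (p ∧ ¬p). -/
def ci : Fm := .imp (.neg (.circ (.var 0))) (.conj (.var 0) (.neg (.var 0)))
/-- (ci_j)  ∘¬^j∘p. -/
def cij (j : ℕ) : Fm := .circ (negIter j (.circ (.var 0)))

/-- `HmCi B` : the Hilbert system extending the positive-classical base `B`
with (Ax10), (bc1), (ci) and (ci_j) for every j ≥ 0. -/
def HmCi (B : Set Rule) : Set Rule :=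
  B ∪ {(∅, ax10), (∅, bc1), (∅, ci)} ∪ {r : Rule | ∃ j : ℕ, r = (∅, cij j)}

/-- `HkSys B k` : the Hilbert system extending the positive-classical base `B`
with (Ax10), (bc1), (ci) and (ci_j) for 0 ≤ j ≤ k only. -/
def HkSys (B : Set Rule) (k : ℕ) : Set Rule :=
  B ∪ {(∅, ax10), (∅, bc1), (∅, ci)} ∪ {r : Rule | ∃ j ≤ k, r = (∅, cij j)}

/-- Carrier V_k = {1,…,2(k+1)} of the matrix M_k. -/
def Vk (k : ℕ) : Set ℕ := {x | 1 ≤ x ∧ x ≤ 2 * (k + 1)}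
/-- Designated set D_k = {k+2,…,2(k+1)} of the matrix M_k. -/
def Dk (k : ℕ) : Set ℕ := {x | k + 2 ≤ x ∧ x ≤ 2 * (k + 1)}

instance (k x : ℕ) : Decidable (x ∈ Dk k) :=
  inferInstanceAs (Decidable (k + 2 ≤ x ∧ x ≤ 2 * (k + 1)))

/-- Disjunction of M_k: 1 if both arguments are undesignated, k+2 otherwise. -/
def mOr (k x y : ℕ) : ℕ := if x ∉ Dk k ∧ y ∉ Dk k then 1 else k + 2
/-- Conjunction of M_k: k+2 if both arguments are designated, 1 otherwise. -/
def mAnd (k x y : ℕ) : ℕ := if x ∈ Dk k ∧ y ∈ Dk k then k + 2 else 1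
/-- Implication of M_k: 1 if the first argument is designated and the second is not,
k+2 otherwise. -/
def mImp (k x y : ℕ) : ℕ := if x ∈ Dk k ∧ y ∉ Dk k then 1 else k + 2
/-- Consistency operator of M_k: 1 at 2(k+1), k+2 elsewhere. -/
def mCirc (k x : ℕ) : ℕ := if x = 2 * (k + 1) then 1 else k + 2
/-- Negation of M_k: ¬x = k+2 if x ∈ {1, 2(k+1)}; ¬x = x + (k+1) if 2 ≤ x ≤ k+1;
¬x = x − k if k+2 ≤ x ≤ 2k+1 (values outside the carrier are irrelevant). -/
def mNeg (k x : ℕ) : ℕ :=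
  if x = 1 ∨ x = 2 * (k + 1) then k + 2
  else if 2 ≤ x ∧ x ≤ k + 1 then x + (k + 1)
  else if k + 2 ≤ x ∧ x ≤ 2 * k + 1 then x - k
  else x

/-- Classical conjunction on the two-element Boolean matrix B₂ (carrier {0,1}). -/
def b2And (x y : ℕ) : ℕ := if x = 1 ∧ y = 1 then 1 else 0
/-- Classical disjunction on B₂. -/
def b2Or (x y : ℕ) : ℕ := if x = 1 ∨ y = 1 then 1 else 0
/-- Classical implication on B₂. -/
def b2Imp (x y : ℕ) : ℕ := if x = 1 ∧ y = 0 then 0 else 1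
/-- The map h : V_k → {0,1} sending designated values to 1 and the rest to 0. -/
def hmap (k x : ℕ) : ℕ := if x ∈ Dk k then 1 else 0

/-- Homomorphic valuations on the matrix M_k. -/
def IsValMk (k : ℕ) (v : Fm → ℕ) : Prop :=
  (∀ φ : Fm, v φ ∈ Vk k) ∧
  (∀ φ ψ : Fm, v (.conj φ ψ) = mAnd k (v φ) (v ψ)) ∧
  (∀ φ ψ : Fm, v (.disj φ ψ) = mOr k (v φ) (v ψ)) ∧
  (∀ φ ψ : Fm, v (.imp φ ψ) = mImp k (v φ) (v ψ)) ∧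
  (∀ φ : Fm, v (.neg φ) = mNeg k (v φ)) ∧
  (∀ φ : Fm, v (.circ φ) = mCirc k (v φ))

/-- Valuations on the two-element Boolean matrix B₂ over the signature {∧,∨,→}:
maps into {0,1} commuting with the positive connectives. -/
def IsValB2 (v : Fm → ℕ) : Prop :=
  (∀ φ : Fm, v φ = 0 ∨ v φ = 1) ∧
  (∀ φ ψ : Fm, v (.conj φ ψ) = b2And (v φ) (v ψ)) ∧
  (∀ φ ψ : Fm, v (.disj φ ψ) = b2Or (v φ) (v ψ)) ∧
  (∀ φ ψ : Fm, v (.imp φ ψ) = b2Imp (v φ) (v ψ))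

/-- A rule is sound for B₂ when every B₂-valuation designating all its premises
designates its conclusion. -/
def SoundB2 (r : Rule) : Prop :=
  ∀ v : Fm → ℕ, IsValB2 v → (∀ ψ ∈ r.1, v ψ = 1) → v r.2 = 1

/-- Positive formulas: built from variables using only ∧, ∨, →. -/
inductive Positive : Fm → Prop where
  | var : ∀ n : ℕ, Positive (.var n)
  | conj : ∀ {φ ψ : Fm}, Positive φ → Positive ψ → Positive (.conj φ ψ)
  | disj : ∀ {φ ψ : Fm}, Positive φ → Positive ψ → Positive (.disj φ ψ)
  | imp : ∀ {φ ψ : Fm}, Positive φ → Positive ψ → Positive (.imp φ ψ)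


lemma mem_Dk {k x : ℕ} : x ∈ Dk k ↔ k + 2 ≤ x ∧ x ≤ 2 * (k + 1) := Iff.rfl

lemma kp2_mem (k : ℕ) : k + 2 ∈ Dk k := ⟨le_refl _, by omega⟩

lemma one_not_mem (k : ℕ) : (1 : ℕ) ∉ Dk k := by
  intro h
  exact absurd h.1 (by omega)

lemma hmap_mAnd (k x y : ℕ) : hmap k (mAnd k x y) = b2And (hmap k x) (hmap k y) := by
  by_cases hx : x ∈ Dk k <;> by_cases hy : y ∈ Dk k <;>
    simp [hmap, mAnd, b2And, hx, hy, kp2_mem, one_not_mem]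

lemma hmap_mOr (k x y : ℕ) : hmap k (mOr k x y) = b2Or (hmap k x) (hmap k y) := by
  by_cases hx : x ∈ Dk k <;> by_cases hy : y ∈ Dk k <;>
    simp [hmap, mOr, b2Or, hx, hy, kp2_mem, one_not_mem]

lemma hmap_mImp (k x y : ℕ) : hmap k (mImp k x y) = b2Imp (hmap k x) (hmap k y) := by
  by_cases hx : x ∈ Dk k <;> by_cases hy : y ∈ Dk k <;>
    simp [hmap, mImp, b2Imp, hx, hy, kp2_mem, one_not_mem]

lemma ax10_sound (k a : ℕ) (ha : a ∈ Vk k) : mOr k a (mNeg k a) ∈ Dk k := by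
  simp only [mOr, mNeg, Dk, Vk, Set.mem_setOf_eq] at *
  split_ifs <;> omega

lemma bc1_sound (k a q : ℕ) (ha : a ∈ Vk k) :
    mImp k (mCirc k a) (mImp k a (mImp k (mNeg k a) q)) ∈ Dk k := by
  simp only [mImp, mCirc, mNeg, Dk, Vk, Set.mem_setOf_eq] at *
  split_ifs <;> omega

lemma ci_sound (k a : ℕ) (hk : 1 ≤ k) (ha : a ∈ Vk k) :
    mImp k (mNeg k (mCirc k a)) (mAnd k a (mNeg k a)) ∈ Dk k := by
  simp only [mImp, mAnd, mNeg, mCirc, Dk, Vk, Set.mem_setOf_eq] at *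
  split_ifs <;> omega

lemma iter_kp2 (k : ℕ) (hk : 1 ≤ k) : ∀ i, i + 1 ≤ k →
    (mNeg k)^[2 * i] (k + 2) = k + 2 + i ∧ (mNeg k)^[2 * i + 1] (k + 2) = i + 2 := by
  intro i
  induction i with
  | zero =>
    intro _
    constructor
    · norm_num
    · have e : 2 * 0 + 1 = 1 := rfl
      rw [e, Function.iterate_one]
      simp only [mNeg]
      split_ifs <;> omega
  | succ i ih =>
    intro hi
    obtain ⟨h1, h2⟩ := ih (by omega)
    have e1 : 2 * (i + 1) = (2 * i + 1) + 1 := by ring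
    have e2 : 2 * (i + 1) + 1 = (2 * (i + 1)) + 1 := rfl
    constructor
    · rw [e1, Function.iterate_succ_apply', h2]
      simp only [mNeg]
      split_ifs <;> omega
    · rw [e2, Function.iterate_succ_apply', e1, Function.iterate_succ_apply', h2]
      simp only [mNeg]
      split_ifs <;> omega

lemma iter_ne_kp2 (k : ℕ) (hk : 1 ≤ k) (j : ℕ) (hj : j ≤ 2 * k - 1) :
    (mNeg k)^[j] (k + 2) ≠ 2 * (k + 1) := by
  rcases Nat.even_or_odd j with ⟨i, hi⟩ | ⟨i, hi⟩
  · have e : j = 2 * i := by omega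
    rw [e, (iter_kp2 k hk i (by omega)).1]
    omega
  · have e : j = 2 * i + 1 := by omega
    rw [e, (iter_kp2 k hk i (by omega)).2]
    omega

lemma iter_ne_one (k : ℕ) (hk : 1 ≤ k) (j : ℕ) (hj : j ≤ 2 * k - 1) :
    (mNeg k)^[j] 1 ≠ 2 * (k + 1) := by
  cases j with
  | zero => simp; omega
  | succ m =>
    rw [Function.iterate_succ_apply]
    have h1 : mNeg k 1 = k + 2 := by
      simp [mNeg]
    rw [h1]
    exact iter_ne_kp2 k hk m (by omega)

lemma cij_sound (k a j : ℕ) (hk : 1 ≤ k) (hj : j ≤ 2 * k - 1) :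
    mCirc k ((mNeg k)^[j] (mCirc k a)) ∈ Dk k := by
  set b := mCirc k a with hb
  have hne : (mNeg k)^[j] b ≠ 2 * (k + 1) := by
    rw [hb]
    unfold mCirc
    split_ifs
    · exact iter_ne_one k hk j hj
    · exact iter_ne_kp2 k hk j hj
  have h2 : mCirc k ((mNeg k)^[j] b) = k + 2 := by
    simp only [mCirc, if_neg hne]
  rw [h2]
  exact kp2_mem k

lemma subst_negIter (σ : ℕ → Fm) (j : ℕ) (φ : Fm) :
    subst σ (negIter j φ) = negIter j (subst σ φ) := by
  induction j with
  | zero => rfl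
  | succ n ih => simp only [negIter, subst, ih]

lemma val_negIter (k : ℕ) (v : Fm → ℕ) (hneg : ∀ φ : Fm, v (.neg φ) = mNeg k (v φ))
    (j : ℕ) (φ : Fm) : v (negIter j φ) = (mNeg k)^[j] (v φ) := by
  induction j with
  | zero => rfl
  | succ n ih => simp only [negIter, hneg, ih, Function.iterate_succ_apply']


/-- soundness of H^{2k−1} with respect to M_k, given a
positive-classical base whose rules are sound for B₂. -/
theorem stmt10 (B : Set Rule)
    (hpos : ∀ r ∈ B, (∀ ψ ∈ r.1, Positive ψ) ∧ Positive r.2)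
    (hsnd : ∀ r ∈ B, SoundB2 r)
    (k : ℕ) (hk : 1 ≤ k) (Γ : Set Fm) (φ : Fm)
    (hder : Derives (HkSys B (2 * k - 1)) Γ φ)
    (v : Fm → ℕ) (hv : IsValMk k v) (hΓ : ∀ ψ ∈ Γ, v ψ ∈ Dk k) :
    v φ ∈ Dk k := by
  induction hder with
  | prem h => exact hΓ _ h
  | rule r σ hr hprem ih =>
    obtain ⟨hV, hconj, hdisj, himp, hneg, hcirc⟩ := hv
    rcases hr with (hB | hax) | ⟨j, hj, rfl⟩
    · -- base rule, sound for B₂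
      have hw : IsValB2 (fun ψ => hmap k (v (subst σ ψ))) := by
        refine ⟨?_, ?_, ?_, ?_⟩
        · intro φ
          simp only [hmap]
          split_ifs <;> simp
        · intro φ ψ
          simp only [subst, hconj, hmap_mAnd]
        · intro φ ψ
          simp only [subst, hdisj, hmap_mOr]
        · intro φ ψ
          simp only [subst, himp, hmap_mImp]
      have h1 := hsnd r hB _ hw (fun ψ hψ => by
        have := ih ψ hψ
        simp only [hmap, if_pos this])
      simp only [hmap] at h1
      by_contra hc
      rw [if_neg hc] at h1
      exact one_ne_zero h1.symm
    · simp only [Set.mem_insert_iff, Set.mem_singleton_iff] at hax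
      rcases hax with rfl | rfl | rfl
      · show v (subst σ ax10) ∈ Dk k
        simp only [ax10, subst, hdisj, hneg]
        exact ax10_sound k (v (σ 0)) (hV _)
      · show v (subst σ bc1) ∈ Dk k
        simp only [bc1, subst, himp, hneg, hcirc]
        exact bc1_sound k (v (σ 0)) (v (σ 1)) (hV _)
      · show v (subst σ ci) ∈ Dk k
        simp only [ci, subst, himp, hneg, hcirc, hconj]
        exact ci_sound k (v (σ 0)) hk (hV _)
    · show v (subst σ (cij j)) ∈ Dk k
      simp only [cij, subst, subst_negIter, hcirc,
        val_negIter k v hneg]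
      exact cij_sound k (v (subst σ (.var 0))) j hk hj
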